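/- For every pattern τ without internal dashes (i.e., a factor) of length ℓ, with k = ⌈log₂ ℓ⌉, setting a = (number of occurrences of τ as a factor of the kernel K_ℓ(D_k·1·C_k)) and b = (number of occurrences of τ as a factor of K_ℓ(D_k·2·C_k)), the counts c_n (occurrences of τ as a factor of C_n) and d_n (occurrences in D_n) satisfy, for all n > k+1: c_n = c_{n-1} + d_{n-1} + a and d_n = c_{n-1} + d_{n-1} + b; hence c_n = (a + b + c_{k+1} + d_{k+1})·2^{n-k-2} - b and d_n = (a + b + c_{k+1} + d_{k+1})·2^{n-k-2} - a. -/

import Mathlib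

/-- The pair `(C_n, D_n)` of sigma-words, with `C_0 = D_0 = []`,
`C_{k+1} = C_k · 1 · D_k`, `D_{k+1} = C_k · 2 · D_k`
(so `C_1 = [1]`, `D_1 = [2]`). -/
def sigmaCD : ℕ → List ℕ × List ℕ
  | 0 => ([], [])
  | k + 1 => ((sigmaCD k).1 ++ 1 :: (sigmaCD k).2, (sigmaCD k).1 ++ 2 :: (sigmaCD k).2)

/-- The sigma-word `C_n`. -/
def sigmaC (n : ℕ) : List ℕ := (sigmaCD n).1

/-- The sigma-word `D_n`. -/
def sigmaD (n : ℕ) : List ℕ := (sigmaCD n).2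

/-- Number of occurrences of `p` as a (not necessarily contiguous) subsequence of `w`,
counted with multiplicity of position sets. -/
def subseqCount (p w : List ℕ) : ℕ := (w.sublistsLen p.length).count p

/-- Number of occurrences of `p` as a factor (contiguous subword) of `w`,
i.e. the number of starting positions at which `p` occurs in `w`. -/
def factorCount (p w : List ℕ) : ℕ :=
  (List.range w.length).countP fun i => decide ((w.drop i).take p.length = p)

/-- The kernel of order `ℓ` of a word `W = A · a · B` with `|A| = |B|`:
the `ℓ - 1` rightmost letters of `A`, the letter `a`, and the `ℓ - 1` leftmost
letters of `B`; the empty word if `|A| < ℓ - 1`. -/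
def kernel (ℓ : ℕ) (W : List ℕ) : List ℕ :=
  if W.length / 2 < ℓ - 1 then []
  else (W.drop (W.length / 2 - (ℓ - 1))).take (2 * ℓ - 1)

/-! An occurrence of `τ` in `C_{m+1} = C_m · 1 · D_m` (or in `D_{m+1} = C_m · 2 · D_m`) lies
inside `C_m`, inside `D_m`, or covers the middle letter; the last kind are exactly the occurrences
in the window of `|τ| - 1` letters on either side of that letter. For `m > k`, `C_m` ends with
`D_k` and `D_m` begins with `C_k`, and `|D_k| = |C_k| = 2^k - 1 ≥ |τ| - 1`, so the window is the
kernel `K_ℓ(D_k · x · C_k)`. This gives the recurrence, under which `c_m + d_m + a + b` doubles at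
each step, whence the closed form. -/

def factorCountBelow (τ w : List ℕ) (n : ℕ) : ℕ :=
  (List.range n).countP fun i => decide ((w.drop i).take τ.length = τ)

lemma factorCount_eq_factorCountBelow (τ w : List ℕ) :
    factorCount τ w = factorCountBelow τ w w.length := rfl

lemma factorCountBelow_add (τ w : List ℕ) (m n : ℕ) :
    factorCountBelow τ w (m + n) = factorCountBelow τ w m + factorCountBelow τ (w.drop m) n := by
  simp only [factorCountBelow, List.range_add, List.countP_append, List.countP_map, List.drop_drop]
  rfl

lemma factorCountBelow_eq_zero_of_length_lt {τ w : List ℕ} (h : w.length < τ.length) (n : ℕ) :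
    factorCountBelow τ w n = 0 := by
  refine List.countP_eq_zero.2 fun i _ hi => ?_
  have := congrArg List.length (of_decide_eq_true hi)
  simp only [List.length_take, List.length_drop] at this
  omega

lemma factorCountBelow_eq_factorCount {τ w : List ℕ} (hτ : τ ≠ []) {n : ℕ}
    (hn : w.length + 1 - τ.length ≤ n) : factorCountBelow τ w n = factorCount τ w := by
  have hτ' := List.length_pos_iff.2 hτ
  set m := w.length + 1 - τ.length
  have htail : (w.drop m).length < τ.length := by simp only [List.length_drop]; omega
  obtain ⟨e, rfl⟩ := Nat.exists_eq_add_of_le hn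
  obtain ⟨e', he'⟩ := Nat.exists_eq_add_of_le (show m ≤ w.length by omega)
  rw [factorCount_eq_factorCountBelow, he', factorCountBelow_add, factorCountBelow_add,
    factorCountBelow_eq_zero_of_length_lt htail, factorCountBelow_eq_zero_of_length_lt htail]

lemma factorCountBelow_congr {τ w w' : List ℕ} {n : ℕ}
    (h : w.take (n + (τ.length - 1)) = w'.take (n + (τ.length - 1))) :
    factorCountBelow τ w n = factorCountBelow τ w' n := by
  refine List.countP_congr fun i hi => ?_
  have hwin : ∀ v : List ℕ, (v.drop i).take τ.length =
      ((v.take (n + (τ.length - 1))).drop i).take τ.length := by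
    intro v
    rw [List.drop_take, List.take_take, Nat.min_eq_left (by rw [List.mem_range] at hi; omega)]
  rw [hwin w, hwin w', h]

lemma factorCount_append_eq_factorCountBelow_add (τ u v : List ℕ) :
    factorCount τ (u ++ v) = factorCountBelow τ (u ++ v) u.length + factorCount τ v := by
  rw [factorCount_eq_factorCountBelow, List.length_append, factorCountBelow_add,
    List.drop_left, factorCount_eq_factorCountBelow]

lemma factorCount_append_eq_left {τ : List ℕ} (hτ : τ ≠ []) (u v : List ℕ) :
    factorCount τ (u ++ v) = factorCount τ u + factorCount τ (u.rtake (τ.length - 1) ++ v) := by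
  have hτ' := List.length_pos_iff.2 hτ
  by_cases hu : u.length < τ.length
  · rw [List.rtake, Nat.sub_eq_zero_of_le (by omega), List.drop_zero,
      factorCount_eq_factorCountBelow τ u, factorCountBelow_eq_zero_of_length_lt hu, zero_add]
  set m := u.length - (τ.length - 1)
  have hsplit : u ++ v = u.take m ++ (u.rtake (τ.length - 1) ++ v) := by
    rw [← List.append_assoc, List.rtake, List.take_append_drop]
  have hleft : factorCountBelow τ (u ++ v) m = factorCount τ u := by
    rw [← factorCountBelow_eq_factorCount hτ (n := m) (by omega)]
    refine factorCountBelow_congr ?_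
    rw [List.take_append_of_le_length (by omega)]
  rw [hsplit, factorCount_append_eq_factorCountBelow_add, List.length_take_of_le (by omega),
    ← hsplit, hleft]

lemma factorCount_append_eq_right {τ : List ℕ} (hτ : τ ≠ []) (u v : List ℕ) :
    factorCount τ (u ++ v) = factorCount τ (u ++ v.take (τ.length - 1)) + factorCount τ v := by
  have hτ' := List.length_pos_iff.2 hτ
  rw [factorCount_append_eq_factorCountBelow_add,
    ← factorCountBelow_eq_factorCount hτ (w := u ++ v.take (τ.length - 1)) (n := u.length)
      (by simp only [List.length_append, List.length_take]; omega)]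
  congr 1
  refine factorCountBelow_congr ?_
  rw [List.take_append, List.take_append, List.take_take, Nat.add_sub_cancel_left, min_self]

lemma factorCount_append_cons {τ : List ℕ} (hτ : τ ≠ []) (A B : List ℕ) (x : ℕ) :
    factorCount τ (A ++ x :: B) = factorCount τ A + factorCount τ B +
      factorCount τ (A.rtake (τ.length - 1) ++ x :: B.take (τ.length - 1)) := by
  have hB := factorCount_append_eq_right hτ (A.rtake (τ.length - 1) ++ [x]) B
  simp only [List.append_assoc, List.singleton_append] at hB
  rw [factorCount_append_eq_left hτ, hB]
  ring

lemma take_eq_take_of_prefix {α : Type*} {l₁ l₂ : List α} (h : l₁ <+: l₂) {t : ℕ}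
    (ht : t ≤ l₁.length) : l₂.take t = l₁.take t := by
  obtain ⟨r, rfl⟩ := h
  exact List.take_append_of_le_length ht

lemma rtake_eq_rtake_of_suffix {α : Type*} {l₁ l₂ : List α} (h : l₁ <:+ l₂) {t : ℕ}
    (ht : t ≤ l₁.length) : l₂.rtake t = l₁.rtake t := by
  obtain ⟨r, rfl⟩ := h
  rw [List.rtake, List.length_append, List.drop_append, List.drop_eq_nil_of_le (by omega),
    List.nil_append, List.rtake]
  congr 1
  omega

lemma kernel_append_cons {A B : List ℕ} (hAB : A.length = B.length) {p : ℕ} (hp : p ≤ A.length)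
    (x : ℕ) : kernel (p + 1) (A ++ x :: B) = A.rtake p ++ x :: B.take p := by
  have hhalf : (A ++ x :: B).length / 2 = A.length := by
    simp only [List.length_append, List.length_cons]; omega
  have hrtake : (A.rtake p).length = p := by simp only [List.rtake, List.length_drop]; omega
  rw [kernel, hhalf, if_neg (by omega), Nat.add_sub_cancel,
    List.drop_append_of_le_length (by omega), ← List.rtake, List.take_append, hrtake,
    List.take_of_length_le (by omega), show 2 * (p + 1) - 1 - p = p + 1 by omega,
    List.take_succ_cons]

lemma sigmaC_succ (n : ℕ) : sigmaC (n + 1) = sigmaC n ++ 1 :: sigmaD n := rfl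

lemma sigmaD_succ (n : ℕ) : sigmaD (n + 1) = sigmaC n ++ 2 :: sigmaD n := rfl

lemma length_sigmaD (n : ℕ) : (sigmaD n).length = (sigmaC n).length := by
  cases n with
  | zero => rfl
  | succ n => simp only [sigmaC_succ, sigmaD_succ, List.length_append, List.length_cons]

lemma length_sigmaC (n : ℕ) : (sigmaC n).length = 2 ^ n - 1 := by
  induction n with
  | zero => rfl
  | succ n ih =>
    rw [sigmaC_succ, List.length_append, List.length_cons, length_sigmaD, ih, pow_succ]
    have := Nat.one_le_two_pow (n := n)
    omega

lemma sigmaC_prefix_sigmaC {k m : ℕ} (h : k ≤ m) : sigmaC k <+: sigmaC m := by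
  induction m, h using Nat.le_induction with
  | base => exact List.prefix_refl _
  | succ m _ ih => exact ih.trans (List.prefix_append _ _)

lemma sigmaC_prefix_sigmaD {k m : ℕ} (h : k < m) : sigmaC k <+: sigmaD m := by
  obtain ⟨j, hj, rfl⟩ : ∃ j, k ≤ j ∧ m = j + 1 := ⟨m - 1, by omega, by omega⟩
  exact (sigmaC_prefix_sigmaC hj).trans (List.prefix_append _ _)

lemma sigmaD_suffix_sigmaD {k m : ℕ} (h : k ≤ m) : sigmaD k <:+ sigmaD m := by
  induction m, h using Nat.le_induction with
  | base => exact List.suffix_refl _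
  | succ m _ ih => exact ih.trans ((List.suffix_cons _ _).trans (List.suffix_append _ _))

lemma sigmaD_suffix_sigmaC {k m : ℕ} (h : k < m) : sigmaD k <:+ sigmaC m := by
  obtain ⟨j, hj, rfl⟩ : ∃ j, k ≤ j ∧ m = j + 1 := ⟨m - 1, by omega, by omega⟩
  exact (sigmaD_suffix_sigmaD hj).trans ((List.suffix_cons _ _).trans (List.suffix_append _ _))

lemma factorCount_sigmaC_append_cons_sigmaD {τ : List ℕ} (hτ : τ ≠ []) {k m : ℕ}
    (hk : τ.length ≤ 2 ^ k) (hkm : k < m) (x : ℕ) :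
    factorCount τ (sigmaC m ++ x :: sigmaD m) = factorCount τ (sigmaC m) +
      factorCount τ (sigmaD m) + factorCount τ (kernel τ.length (sigmaD k ++ x :: sigmaC k)) := by
  have hlen : τ.length - 1 ≤ (sigmaC k).length := by rw [length_sigmaC]; omega
  obtain ⟨p, hp⟩ : ∃ p, τ.length = p + 1 := Nat.exists_eq_add_one.2 (List.length_pos_iff.2 hτ)
  rw [factorCount_append_cons hτ,
    rtake_eq_rtake_of_suffix (sigmaD_suffix_sigmaC hkm) (by rwa [length_sigmaD]),
    take_eq_take_of_prefix (sigmaC_prefix_sigmaD hkm) hlen, hp, Nat.add_sub_cancel,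
    kernel_append_cons (length_sigmaD k) (by rw [length_sigmaD]; omega)]

lemma eq_mul_two_pow_sub_of_recurrence {c d : ℕ → ℕ} {a b s : ℕ}
    (hc : ∀ m, s ≤ m → c (m + 1) = c m + d m + a)
    (hd : ∀ m, s ≤ m → d (m + 1) = c m + d m + b) {n : ℕ} (hn : s < n) :
    c n = (a + b + c s + d s) * 2 ^ (n - s - 1) - b ∧
      d n = (a + b + c s + d s) * 2 ^ (n - s - 1) - a := by
  have hsum : ∀ m, s ≤ m → c m + d m + a + b = (a + b + c s + d s) * 2 ^ (m - s) := by
    intro m hm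
    induction m, hm using Nat.le_induction with
    | base => rw [Nat.sub_self, pow_zero, mul_one]; ring
    | succ m hm ih =>
      rw [hc m hm, hd m hm, Nat.sub_add_comm hm, pow_succ, ← mul_assoc, ← ih]
      ring
  obtain ⟨m, hm, rfl⟩ : ∃ m, s ≤ m ∧ n = m + 1 := ⟨n - 1, by omega, by omega⟩
  have := hsum m hm
  rw [hc m hm, hd m hm, show m + 1 - s - 1 = m - s by omega]
  omega

theorem factor_recurrence_general (τ : List ℕ) (hτ : τ ≠ []) :
    ∀ n : ℕ, Nat.clog 2 τ.length + 1 < n →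
      let ℓ := τ.length
      let k := Nat.clog 2 ℓ
      let a := factorCount τ (kernel ℓ (sigmaD k ++ 1 :: sigmaC k))
      let b := factorCount τ (kernel ℓ (sigmaD k ++ 2 :: sigmaC k))
      factorCount τ (sigmaC n) =
          factorCount τ (sigmaC (n - 1)) + factorCount τ (sigmaD (n - 1)) + a ∧
      factorCount τ (sigmaD n) =
          factorCount τ (sigmaC (n - 1)) + factorCount τ (sigmaD (n - 1)) + b ∧
      factorCount τ (sigmaC n) =
          (a + b + factorCount τ (sigmaC (k + 1)) + factorCount τ (sigmaD (k + 1))) *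
            2 ^ (n - k - 2) - b ∧
      factorCount τ (sigmaD n) =
          (a + b + factorCount τ (sigmaC (k + 1)) + factorCount τ (sigmaD (k + 1))) *
            2 ^ (n - k - 2) - a := by
  intro n hn
  obtain ⟨m, hm, rfl⟩ : ∃ m, Nat.clog 2 τ.length < m ∧ n = m + 1 := ⟨n - 1, by omega, by omega⟩
  intro ℓ k a b
  have hk : τ.length ≤ 2 ^ k := Nat.le_pow_clog one_lt_two _
  have step (x : ℕ) {m : ℕ} (hm : k < m) :=
    factorCount_sigmaC_append_cons_sigmaD hτ hk hm x
  have closed := eq_mul_two_pow_sub_of_recurrence (c := fun m => factorCount τ (sigmaC m))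
    (d := fun m => factorCount τ (sigmaD m)) (s := k + 1) (fun _ hm => step 1 hm)
    (fun _ hm => step 2 hm) hn
  rw [Nat.sub_sub, Nat.add_sub_cancel]
  exact ⟨step 1 hm, step 2 hm, closed⟩

theorem factor_recurrence (τ : List ℕ) (hτ : τ ≠ []) (hlet : ∀ x ∈ τ, x = 1 ∨ x = 2) :
    ∀ n : ℕ, Nat.clog 2 τ.length + 1 < n →
      let ℓ := τ.length
      let k := Nat.clog 2 ℓ
      let a := factorCount τ (kernel ℓ (sigmaD k ++ 1 :: sigmaC k))
      let b := factorCount τ (kernel ℓ (sigmaD k ++ 2 :: sigmaC k))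
      factorCount τ (sigmaC n) =
          factorCount τ (sigmaC (n - 1)) + factorCount τ (sigmaD (n - 1)) + a ∧
      factorCount τ (sigmaD n) =
          factorCount τ (sigmaC (n - 1)) + factorCount τ (sigmaD (n - 1)) + b ∧
      factorCount τ (sigmaC n) =
          (a + b + factorCount τ (sigmaC (k + 1)) + factorCount τ (sigmaD (k + 1))) *
            2 ^ (n - k - 2) - b ∧
      factorCount τ (sigmaD n) =
          (a + b + factorCount τ (sigmaC (k + 1)) + factorCount τ (sigmaD (k + 1))) *
            2 ^ (n - k - 2) - a :=
  factor_recurrence_general τ hτ
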